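/- arXiv:1311.0620 — 4 statements merged into one kernel-verified Lean document; each statement's English description precedes it below -/
import Mathlib

section
/- If X is a modular element of the intersection lattice L(A) of a central hyperplane arrangement A, and Z is any element of L(A), then X ∩ Z is a modular element of the intersection lattice L(A^Z) of the restricted arrangement A^Z. -/
open Submodule

/-- The intersection lattice of the arrangement `A` with ambient space `Z`:
all subspaces of the form `Z ⊓ sInf S` for `S ⊆ A` (the empty intersection gives `Z`). -/
def ArrLatIn {V : Type*} [AddCommGroup V] [Module ℂ V] (Z : Submodule ℂ V)
    (A : Set (Submodule ℂ V)) : Set (Submodule ℂ V) :=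
  {X | ∃ S ⊆ A, X = Z ⊓ sInf S}

/-- `X` is a modular element of the lattice `ℒ` (ordered by reverse inclusion):
`X ∈ ℒ` and `X + Y ∈ ℒ` for every `Y ∈ ℒ`. -/
def ModularIn {V : Type*} [AddCommGroup V] [Module ℂ V]
    (ℒ : Set (Submodule ℂ V)) (X : Submodule ℂ V) : Prop :=
  X ∈ ℒ ∧ ∀ Y ∈ ℒ, X ⊔ Y ∈ ℒ

/-- The restriction of the arrangement `A` to the subspace `Z`:
the hyperplanes `Z ∩ H` for `H ∈ A` with `Z ⊄ H`. -/
def Restrict {V : Type*} [AddCommGroup V] [Module ℂ V]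
    (A : Set (Submodule ℂ V)) (Z : Submodule ℂ V) : Set (Submodule ℂ V) :=
  {W | ∃ H ∈ A, ¬ Z ≤ H ∧ W = Z ⊓ H}

/-- A (lattice of subspaces ordered by reverse inclusion) is supersolvable if it admits a
maximal chain `C 0 > C 1 > ... > C n` (top to bottom) consisting of modular elements. -/
def LatSupersolvable {V : Type*} [AddCommGroup V] [Module ℂ V]
    (ℒ : Set (Submodule ℂ V)) : Prop :=
  ∃ n, ∃ C : Fin (n + 1) → Submodule ℂ V,
    (∀ i, ModularIn ℒ (C i)) ∧
    (∀ W ∈ ℒ, W ≤ C 0) ∧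
    (∀ W ∈ ℒ, C (Fin.last n) ≤ W) ∧
    (∀ i : Fin n, C i.succ < C i.castSucc) ∧
    (∀ i : Fin n, ∀ W ∈ ℒ, ¬(C i.succ < W ∧ W < C i.castSucc))

/-- The product of two arrangements. -/
def ProdArr {V₁ V₂ : Type*} [AddCommGroup V₁] [Module ℂ V₁] [AddCommGroup V₂] [Module ℂ V₂]
    (A₁ : Set (Submodule ℂ V₁)) (A₂ : Set (Submodule ℂ V₂)) : Set (Submodule ℂ (V₁ × V₂)) :=
  ((fun H => H.prod (⊤ : Submodule ℂ V₂)) '' A₁) ∪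
    ((fun H => (⊤ : Submodule ℂ V₁).prod H) '' A₂)

/-- The coordinate hyperplane `ker x_i` in `ℂ^ℓ`. -/
noncomputable def coordH (ℓ : ℕ) (i : Fin ℓ) : Submodule ℂ (Fin ℓ → ℂ) :=
  LinearMap.ker (LinearMap.proj i : (Fin ℓ → ℂ) →ₗ[ℂ] ℂ)

/-- The hyperplane `ker (x_i - ζ x_j)` in `ℂ^ℓ`. -/
noncomputable def diffH (ℓ : ℕ) (i j : Fin ℓ) (ζ : ℂ) : Submodule ℂ (Fin ℓ → ℂ) :=
  LinearMap.ker ((LinearMap.proj i : (Fin ℓ → ℂ) →ₗ[ℂ] ℂ) - ζ • (LinearMap.proj j))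

/-- The intermediate arrangement `A^k_ℓ(r)`: the first `k` coordinate hyperplanes together with
all hyperplanes `ker (x_i - ζ x_j)` for `i < j` and `ζ` an `r`-th root of unity. -/
def interArr (r ℓ k : ℕ) : Set (Submodule ℂ (Fin ℓ → ℂ)) :=
  {H | ∃ i : Fin ℓ, (i : ℕ) < k ∧ H = coordH ℓ i} ∪
    {H | ∃ i j : Fin ℓ, i < j ∧ ∃ ζ : ℂ, ζ ^ r = 1 ∧ H = diffH ℓ i j ζ}

/-- The Boolean subarrangement `B^k_ℓ` of the first `k` coordinate hyperplanes of `ℂ^ℓ`. -/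
def boolArr (ℓ k : ℕ) : Set (Submodule ℂ (Fin ℓ → ℂ)) :=
  {H | ∃ i : Fin ℓ, (i : ℕ) < k ∧ H = coordH ℓ i}

/-- The degree-one polynomial corresponding to a linear form on `ℂ^n`. -/
noncomputable def linPoly {n : ℕ} (f : (Fin n → ℂ) →ₗ[ℂ] ℂ) : MvPolynomial (Fin n) ℂ :=
  ∑ i, MvPolynomial.C (f (Pi.single i 1)) * MvPolynomial.X i

/-- The module of derivations `D(Q) = {θ | θ(Q) ∈ Q·S}` is free with a homogeneous basis
`θ 0, ..., θ (n-1)` of polynomial degrees `e 0, ..., e (n-1)`. -/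
def IsFreeWithExponents (n : ℕ) (Q : MvPolynomial (Fin n) ℂ) (e : Fin n → ℕ) : Prop :=
  ∃ θ : Fin n → Derivation ℂ (MvPolynomial (Fin n) ℂ) (MvPolynomial (Fin n) ℂ),
    (∀ i, θ i Q ∈ Ideal.span {Q}) ∧
    (∀ i j, ((θ i) (MvPolynomial.X j)).IsHomogeneous (e i)) ∧
    (∀ c : Fin n → MvPolynomial (Fin n) ℂ, (∑ i, c i • θ i) = 0 → ∀ i, c i = 0) ∧
    (∀ η : Derivation ℂ (MvPolynomial (Fin n) ℂ) (MvPolynomial (Fin n) ℂ),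
      η Q ∈ Ideal.span {Q} →
      ∃ c : Fin n → MvPolynomial (Fin n) ℂ, η = ∑ i, c i • θ i)

/-- An arrangement is irreducible if it is not a product of two nonempty arrangements, i.e.
there is no nontrivial direct sum decomposition of the ambient space such that every
hyperplane contains one of the two summands. -/
def IsIrreducibleArr {V : Type*} [AddCommGroup V] [Module ℂ V]
    (A : Set (Submodule ℂ V)) : Prop :=
  ¬ ∃ V₁ V₂ : Submodule ℂ V, V₁ ≠ ⊥ ∧ V₂ ≠ ⊥ ∧ V₁ ⊓ V₂ = ⊥ ∧ V₁ ⊔ V₂ = ⊤ ∧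
      ∀ H ∈ A, V₁ ≤ H ∨ V₂ ≤ H

/-- The restriction of `A` to the hyperplane `H` is linearly isomorphic to the intermediate
arrangement `A^{k'}_{ℓ'}(r)`. -/
def RestrEquiv (r ℓ : ℕ) (A : Set (Submodule ℂ (Fin ℓ → ℂ))) (H : Submodule ℂ (Fin ℓ → ℂ))
    (ℓ' k' : ℕ) : Prop :=
  ∃ φ : (Fin ℓ' → ℂ) →ₗ[ℂ] (Fin ℓ → ℂ), Function.Injective φ ∧ LinearMap.range φ = H ∧
    Restrict A H = (fun K => Submodule.map φ K) '' interArr r ℓ' k'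

/-! Restricting to `Z` only intersects with `Z`, so `L(A^Z) = {Z ∩ W | W ∈ L(A)}`. If `Y ⊆ Z` lies
there, then `Y ∈ L(A)` because `L(A)` is closed under intersection, and the modular law gives
`(X ∩ Z) + Y = (X + Y) ∩ Z` with `X + Y ∈ L(A)` by modularity of `X`. -/

section CompleteLattice

variable {α : Type*} [CompleteLattice α]

theorem inf_sInf_image_inf (z : α) (T : Set α) : z ⊓ sInf ((z ⊓ ·) '' T) = z ⊓ sInf T := by
  refine le_antisymm (le_inf inf_le_left (le_sInf fun h hh => ?_))
    (le_inf inf_le_left (le_sInf ?_))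
  · exact (inf_le_right.trans (sInf_le (Set.mem_image_of_mem _ hh))).trans inf_le_right
  · rintro _ ⟨h, hh, rfl⟩
    exact inf_le_inf_left z (sInf_le hh)

theorem inf_sInf_sep_not_le (z : α) (S : Set α) : z ⊓ sInf {h ∈ S | ¬z ≤ h} = z ⊓ sInf S := by
  refine le_antisymm (le_inf inf_le_left (le_sInf fun h hh => ?_))
    (inf_le_inf_left z (sInf_le_sInf (Set.sep_subset _ _)))
  by_cases hzh : z ≤ h
  · exact inf_le_left.trans hzh
  · exact inf_le_right.trans (sInf_le ⟨hh, hzh⟩)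

end CompleteLattice

section Arrangement

variable {V : Type*} [AddCommGroup V] [Module ℂ V]

theorem ModularIn.inf_image {ℒ : Set (Submodule ℂ V)}
    (hinf : ∀ P ∈ ℒ, ∀ Q ∈ ℒ, P ⊓ Q ∈ ℒ) {Z X : Submodule ℂ V} (hZ : Z ∈ ℒ)
    (hX : ModularIn ℒ X) : ModularIn ((Z ⊓ ·) '' ℒ) (X ⊓ Z) := by
  refine ⟨⟨X, hX.1, inf_comm Z X⟩, ?_⟩
  rintro _ ⟨W, hW, rfl⟩
  refine ⟨X ⊔ Z ⊓ W, hX.2 _ (hinf Z hZ W hW), ?_⟩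
  show Z ⊓ (X ⊔ Z ⊓ W) = X ⊓ Z ⊔ Z ⊓ W
  rw [inf_comm Z, sup_comm X, sup_inf_assoc_of_le X inf_le_left, sup_comm]

theorem inf_mem_arrLatIn {Z P Q : Submodule ℂ V} {A : Set (Submodule ℂ V)}
    (hP : P ∈ ArrLatIn Z A) (hQ : Q ∈ ArrLatIn Z A) : P ⊓ Q ∈ ArrLatIn Z A := by
  obtain ⟨S, hS, rfl⟩ := hP
  obtain ⟨T, hT, rfl⟩ := hQ
  exact ⟨S ∪ T, Set.union_subset hS hT, by rw [sInf_union, ← inf_inf_distrib_left]⟩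

theorem arrLatIn_eq_image_inf (Z : Submodule ℂ V) (A : Set (Submodule ℂ V)) :
    ArrLatIn Z A = (Z ⊓ ·) '' ArrLatIn ⊤ A := by
  ext W
  simp only [ArrLatIn, Set.mem_image, Set.mem_ofPred_eq, top_inf_eq]
  constructor
  · rintro ⟨S, hS, rfl⟩
    exact ⟨_, ⟨S, hS, rfl⟩, rfl⟩
  · rintro ⟨_, ⟨S, hS, rfl⟩, rfl⟩
    exact ⟨S, hS, rfl⟩

theorem restrict_eq_image (A : Set (Submodule ℂ V)) (Z : Submodule ℂ V) :
    Restrict A Z = (Z ⊓ ·) '' {H ∈ A | ¬Z ≤ H} := by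
  ext W
  simp only [Restrict, Set.mem_image, Set.mem_ofPred_eq, and_assoc, eq_comm]

theorem arrLatIn_restrict (Z : Submodule ℂ V) (A : Set (Submodule ℂ V)) :
    ArrLatIn Z (Restrict A Z) = ArrLatIn Z A := by
  ext W
  constructor
  · rintro ⟨S, hS, rfl⟩
    rw [restrict_eq_image, Set.subset_image_iff] at hS
    obtain ⟨T, hT, rfl⟩ := hS
    exact ⟨T, hT.trans (Set.sep_subset _ _), inf_sInf_image_inf Z T⟩
  · rintro ⟨S, hS, rfl⟩
    refine ⟨_, ?_, ((inf_sInf_image_inf Z _).trans (inf_sInf_sep_not_le Z S)).symm⟩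
    rw [restrict_eq_image]
    exact Set.image_mono fun H hH => ⟨hS hH.1, hH.2⟩

end Arrangement

theorem stmt_0_general {V : Type*} [AddCommGroup V] [Module ℂ V]
    (A : Set (Submodule ℂ V))
    (Z : Submodule ℂ V) (hZ : Z ∈ ArrLatIn ⊤ A)
    (X : Submodule ℂ V) (hX : ModularIn (ArrLatIn ⊤ A) X) :
    ModularIn (ArrLatIn Z (Restrict A Z)) (X ⊓ Z) := by
  rw [arrLatIn_restrict, arrLatIn_eq_image_inf]
  exact hX.inf_image (fun _ hP _ hQ => inf_mem_arrLatIn hP hQ) hZ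

/-- If `X` is a modular element of `L(A)` and `Z ∈ L(A)`, then `X ∩ Z` is a
modular element of `L(A^Z)`. -/
theorem stmt_0 {V : Type*} [AddCommGroup V] [Module ℂ V]
    (A : Set (Submodule ℂ V)) (hfin : A.Finite) (hhyp : ∀ H ∈ A, IsCoatom H)
    (Z : Submodule ℂ V) (hZ : Z ∈ ArrLatIn ⊤ A)
    (X : Submodule ℂ V) (hX : ModularIn (ArrLatIn ⊤ A) X) :
    ModularIn (ArrLatIn Z (Restrict A Z)) (X ⊓ Z) :=
  stmt_0_general A Z hZ X hX
end

section
/- Let A be a central 4-arrangement and Z ∈ L(A) of dimension 1. If the number of hyperplanes of A containing Z is strictly greater than the number of hyperplanes H ∈ A for which the restriction A^H is supersolvable, then Z is not a modular element of L(A). -/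
open Submodule

/-! If `Z` is modular, it stays modular in the restriction `A^H` to every hyperplane `H ⊇ Z`,
a lattice of rank at most three. Writing `Z = H ∩ ⋂ S` and picking `H' ∈ S`, the chain
`H > H ∩ H' > Z ≥ (bottom)` is then maximal and consists of modular elements: `H` and the
bottom trivially, `H ∩ H'` because it has corank one in `H`. So every hyperplane through `Z`
has supersolvable restriction, which contradicts the count. -/

open Module

namespace Submodule

variable {K V : Type*} [DivisionRing K] [AddCommGroup V] [Module K V] [FiniteDimensional K V]

lemma eq_or_eq_of_finrank_le_add_one {W X U : Submodule K V} (hWX : W ≤ X) (hXU : X ≤ U)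
    (hrank : finrank K U ≤ finrank K W + 1) : X = W ∨ X = U := by
  by_contra! hne
  have h₁ := finrank_lt_finrank_of_lt (lt_of_le_of_ne hWX hne.1.symm)
  have h₂ := finrank_lt_finrank_of_lt (lt_of_le_of_ne hXU hne.2)
  omega

lemma finrank_add_one_of_isCoatom {H : Submodule K V} (hH : IsCoatom H) :
    finrank K H + 1 = finrank K V := by
  have : IsSimpleModule K (V ⧸ H) := isSimpleModule_iff_isCoatom.mpr hH
  rw [← H.finrank_quotient_add_finrank, isSimpleModule_iff_finrank_eq_one.mp this, add_comm]

lemma finrank_inf_add_one_of_isCoatom {H H' : Submodule K V} (hH' : IsCoatom H')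
    (hHH' : ¬ H ≤ H') : finrank K ↥(H ⊓ H') + 1 = finrank K H := by
  have hsup : H ⊔ H' = ⊤ := hH'.2 _ (lt_of_le_of_ne le_sup_right fun h => hHH' (h ▸ le_sup_left))
  have := finrank_sup_add_finrank_inf_eq H H'
  have := finrank_add_one_of_isCoatom hH'
  rw [hsup, finrank_top] at *
  omega

end Submodule

section Lattice

variable {V : Type*} [AddCommGroup V] [Module ℂ V]

lemma le_of_mem_arrLatIn {A : Set (Submodule ℂ V)} {Z X : Submodule ℂ V}
    (hX : X ∈ ArrLatIn Z A) : X ≤ Z := by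
  obtain ⟨S, -, rfl⟩ := hX
  exact inf_le_left

lemma self_mem_arrLatIn (Z : Submodule ℂ V) (A : Set (Submodule ℂ V)) : Z ∈ ArrLatIn Z A :=
  ⟨∅, Set.empty_subset _, by rw [sInf_empty, inf_top_eq]⟩

lemma inf_sInf_mem_arrLatIn (Z : Submodule ℂ V) (A : Set (Submodule ℂ V)) :
    Z ⊓ sInf A ∈ ArrLatIn Z A :=
  ⟨A, subset_rfl, rfl⟩

lemma inf_sInf_le_of_mem_arrLatIn {A : Set (Submodule ℂ V)} {Z X : Submodule ℂ V}
    (hX : X ∈ ArrLatIn Z A) : Z ⊓ sInf A ≤ X := by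
  obtain ⟨S, hS, rfl⟩ := hX
  exact inf_le_inf_left _ (sInf_le_sInf hS)

lemma modularIn_of_forall_le {ℒ : Set (Submodule ℂ V)} {X : Submodule ℂ V} (hX : X ∈ ℒ)
    (h : ∀ Y ∈ ℒ, Y ≤ X) : ModularIn ℒ X :=
  ⟨hX, fun Y hY => by rwa [sup_eq_left.2 (h Y hY)]⟩

lemma modularIn_of_forall_ge {ℒ : Set (Submodule ℂ V)} {X : Submodule ℂ V} (hX : X ∈ ℒ)
    (h : ∀ Y ∈ ℒ, X ≤ Y) : ModularIn ℒ X :=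
  ⟨hX, fun Y hY => by rwa [sup_eq_right.2 (h Y hY)]⟩

lemma mem_arrLatIn_restrict_iff {A : Set (Submodule ℂ V)} {H X : Submodule ℂ V} (hH : H ∈ A) :
    X ∈ ArrLatIn H (Restrict A H) ↔ X ∈ ArrLatIn ⊤ A ∧ X ≤ H := by
  refine ⟨fun hX => ⟨?_, le_of_mem_arrLatIn hX⟩, fun ⟨hX, hXH⟩ => ?_⟩
  · obtain ⟨S, hS, rfl⟩ := hX
    refine ⟨insert H {H' ∈ A | H ⊓ H' ∈ S}, Set.insert_subset hH (Set.sep_subset _ _), ?_⟩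
    rw [top_inf_eq, sInf_insert]
    refine le_antisymm
      (inf_le_inf_left _ (le_sInf fun H' hH' => (sInf_le hH'.2).trans inf_le_right))
      (le_inf inf_le_left (le_sInf fun W hW => ?_))
    obtain ⟨H', hH'A, -, rfl⟩ := hS hW
    exact le_inf inf_le_left
      (inf_le_right.trans (sInf_le (show H' ∈ {H' ∈ A | H ⊓ H' ∈ S} from ⟨hH'A, hW⟩)))
  · obtain ⟨T, hTA, rfl⟩ := hX
    rw [top_inf_eq] at hXH ⊢
    refine ⟨(H ⊓ ·) '' {H' ∈ T | ¬ H ≤ H'}, ?_, le_antisymm (le_inf hXH (le_sInf ?_)) ?_⟩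
    · rintro W ⟨H', ⟨hH'T, hHH'⟩, rfl⟩
      exact ⟨H', hTA hH'T, hHH', rfl⟩
    · rintro W ⟨H', ⟨hH'T, -⟩, rfl⟩
      exact le_inf hXH (sInf_le hH'T)
    · refine le_sInf fun H' hH'T => ?_
      by_cases hHH' : H ≤ H'
      · exact inf_le_left.trans hHH'
      · have hmem : H ⊓ H' ∈ (H ⊓ ·) '' {H' ∈ T | ¬ H ≤ H'} := ⟨H', ⟨hH'T, hHH'⟩, rfl⟩
        exact inf_le_right.trans ((sInf_le hmem).trans inf_le_right)

lemma ModularIn.restrict {A : Set (Submodule ℂ V)} {H Z : Submodule ℂ V}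
    (hmod : ModularIn (ArrLatIn ⊤ A) Z) (hH : H ∈ A) (hZH : Z ≤ H) :
    ModularIn (ArrLatIn H (Restrict A H)) Z := by
  refine ⟨(mem_arrLatIn_restrict_iff hH).2 ⟨hmod.1, hZH⟩, fun Y hY => ?_⟩
  obtain ⟨hYA, hYH⟩ := (mem_arrLatIn_restrict_iff hH).1 hY
  exact (mem_arrLatIn_restrict_iff hH).2 ⟨hmod.2 Y hYA, sup_le hZH hYH⟩

end Lattice

section Supersolvable

variable {V : Type*} [AddCommGroup V] [Module ℂ V] [FiniteDimensional ℂ V]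

lemma modularIn_arrLatIn_of_finrank_add_one {B : Set (Submodule ℂ V)} {H W : Submodule ℂ V}
    (hW : W ∈ ArrLatIn H B) (hrank : finrank ℂ W + 1 = finrank ℂ H) :
    ModularIn (ArrLatIn H B) W := by
  refine ⟨hW, fun Y hY => ?_⟩
  rcases Submodule.eq_or_eq_of_finrank_le_add_one le_sup_left
    (sup_le (le_of_mem_arrLatIn hW) (le_of_mem_arrLatIn hY)) hrank.ge with h | h <;> rw [h]
  exacts [hW, self_mem_arrLatIn H B]

lemma latSupersolvable_of_chain {ℒ : Set (Submodule ℂ V)} {n : ℕ}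
    (C : Fin (n + 1) → Submodule ℂ V)
    (hmod : ∀ i, ModularIn ℒ (C i)) (htop : ∀ W ∈ ℒ, W ≤ C 0)
    (hbot : ∀ W ∈ ℒ, C (Fin.last n) ≤ W) (hle : ∀ i : Fin n, C i.succ ≤ C i.castSucc)
    (hrank : ∀ i : Fin n, finrank ℂ (C i.castSucc) = finrank ℂ (C i.succ) + 1) :
    LatSupersolvable ℒ := by
  refine ⟨n, C, hmod, htop, hbot, fun i => lt_of_le_of_ne (hle i) fun h => ?_,
    fun i W _ ⟨h₁, h₂⟩ => ?_⟩
  · have := hrank i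
    rw [h] at this
    omega
  · rcases Submodule.eq_or_eq_of_finrank_le_add_one h₁.le h₂.le (hrank i).le with h | h
    exacts [h₁.ne' h, h₂.ne h]

lemma latSupersolvable_of_modularIn_finrank_one {B : Set (Submodule ℂ V)} {H Z : Submodule ℂ V}
    (hH : finrank ℂ H = 3) (hB : ∀ W ∈ B, finrank ℂ ↥(H ⊓ W) + 1 = finrank ℂ H)
    (hmod : ModularIn (ArrLatIn H B) Z) (hZ : finrank ℂ Z = 1) :
    LatSupersolvable (ArrLatIn H B) := by
  obtain ⟨S, hSB, hZS⟩ := hmod.1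
  obtain ⟨W, hWS⟩ : S.Nonempty := by
    refine Set.nonempty_iff_ne_empty.2 fun hS => ?_
    rw [hS, sInf_empty, inf_top_eq] at hZS
    rw [hZS, hH] at hZ
    omega
  have hW : H ⊓ W ∈ ArrLatIn H B :=
    ⟨{W}, Set.singleton_subset_iff.2 (hSB hWS), by rw [sInf_singleton]⟩
  have hZW : Z ≤ H ⊓ W := hZS ▸ inf_le_inf_left _ (sInf_le hWS)
  have hWrank := hB W (hSB hWS)
  have hmodH := modularIn_of_forall_le (self_mem_arrLatIn H B) fun Y => le_of_mem_arrLatIn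
  have hmodW := modularIn_arrLatIn_of_finrank_add_one hW hWrank
  set b := H ⊓ sInf B
  have hmodb := modularIn_of_forall_ge (inf_sInf_mem_arrLatIn H B)
    fun Y => inf_sInf_le_of_mem_arrLatIn
  have hbZ : b ≤ Z := inf_sInf_le_of_mem_arrLatIn hmod.1
  -- Rank facts are stated up front: after `simp`, instance arguments still mention `![…]`,
  -- so `omega` would not recognise the atoms.
  have hZWrank : finrank ℂ ↥(H ⊓ W) = finrank ℂ Z + 1 := by omega
  rcases Nat.le_one_iff_eq_zero_or_eq_one.1 (hZ ▸ finrank_mono hbZ) with hb | hb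
  · have hZb : finrank ℂ Z = finrank ℂ b + 1 := by omega
    refine latSupersolvable_of_chain ![H, H ⊓ W, Z, b] ?_ (fun Y => le_of_mem_arrLatIn)
      (fun Y => inf_sInf_le_of_mem_arrLatIn) ?_ ?_ <;>
      simp only [Fin.forall_fin_succ, IsEmpty.forall_iff, Fin.castSucc_zero, Fin.castSucc_succ,
        Fin.succ_zero_eq_one, Fin.succ_one_eq_two, Matrix.cons_val,
        Matrix.cons_val_zero, Matrix.cons_val_one, Matrix.cons_val_succ, Matrix.cons_val_fin_one,
        and_true]
    · exact ⟨hmodH, hmodW, hmod, hmodb⟩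
    · exact ⟨inf_le_left, hZW, hbZ⟩
    · exact ⟨hWrank.symm, hZWrank, hZb⟩
  · have hb_eq : b = Z := Submodule.eq_of_le_of_finrank_le hbZ (by omega)
    refine latSupersolvable_of_chain ![H, H ⊓ W, Z] ?_ (fun Y => le_of_mem_arrLatIn)
      (fun Y => hb_eq ▸ inf_sInf_le_of_mem_arrLatIn) ?_ ?_ <;>
      simp only [Fin.forall_fin_succ, IsEmpty.forall_iff, Fin.castSucc_zero, Fin.castSucc_succ,
        Fin.succ_zero_eq_one, Fin.succ_one_eq_two, Matrix.cons_val,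
        Matrix.cons_val_zero, Matrix.cons_val_one, Matrix.cons_val_succ, Matrix.cons_val_fin_one,
        and_true]
    · exact ⟨hmodH, hmodW, hmod⟩
    · exact ⟨inf_le_left, hZW⟩
    · exact ⟨hWrank.symm, hZWrank⟩

lemma latSupersolvable_restrict_of_modularIn (hV : finrank ℂ V = 4)
    {A : Set (Submodule ℂ V)} (hA : ∀ H ∈ A, IsCoatom H) {H Z : Submodule ℂ V} (hH : H ∈ A)
    (hmod : ModularIn (ArrLatIn ⊤ A) Z) (hZ : finrank ℂ Z = 1) (hZH : Z ≤ H) :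
    LatSupersolvable (ArrLatIn H (Restrict A H)) := by
  have hH3 : finrank ℂ H = 3 := by
    have := Submodule.finrank_add_one_of_isCoatom (hA H hH)
    omega
  refine latSupersolvable_of_modularIn_finrank_one hH3 ?_ (hmod.restrict hH hZH) hZ
  rintro _ ⟨H', hH'A, hHH', rfl⟩
  rw [inf_left_idem]
  exact Submodule.finrank_inf_add_one_of_isCoatom (hA H' hH'A) hHH'

end Supersolvable

theorem stmt_5_general (A : Set (Submodule ℂ (Fin 4 → ℂ))) (hfin : A.Finite)
    (hhyp : ∀ H ∈ A, IsCoatom H)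
    (Z : Submodule ℂ (Fin 4 → ℂ))
    (hdim : Module.finrank ℂ ↥Z = 1)
    (hcount : {H ∈ A | LatSupersolvable (ArrLatIn H (Restrict A H))}.ncard <
      {H ∈ A | Z ≤ H}.ncard) :
    ¬ ModularIn (ArrLatIn ⊤ A) Z := by
  intro hmod
  have hsub : {H ∈ A | Z ≤ H} ⊆ {H ∈ A | LatSupersolvable (ArrLatIn H (Restrict A H))} :=
    fun H ⟨hH, hZH⟩ => ⟨hH, latSupersolvable_restrict_of_modularIn (finrank_fin_fun ℂ) hhyp hH
      hmod hdim hZH⟩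
  exact (Set.ncard_le_ncard hsub (hfin.subset (Set.sep_subset _ _))).not_gt hcount

/-- In a central 4-arrangement, if the number of hyperplanes containing a
dimension-1 flat `Z` exceeds the number of hyperplanes with supersolvable restriction, then
`Z` is not modular. -/
theorem stmt_5 (A : Set (Submodule ℂ (Fin 4 → ℂ))) (hfin : A.Finite)
    (hhyp : ∀ H ∈ A, IsCoatom H)
    (Z : Submodule ℂ (Fin 4 → ℂ)) (hZ : Z ∈ ArrLatIn ⊤ A)
    (hdim : Module.finrank ℂ ↥Z = 1)
    (hcount : {H ∈ A | LatSupersolvable (ArrLatIn H (Restrict A H))}.ncard <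
      {H ∈ A | Z ≤ H}.ncard) :
    ¬ ModularIn (ArrLatIn ⊤ A) Z :=
  stmt_5_general A hfin hhyp Z hdim hcount
end

section
/- For r ≥ 2, ℓ ≥ 3 and 0 ≤ k ≤ ℓ, every element of the intersection lattice of the Boolean subarrangement B^k_ℓ = {H_1, ..., H_k} (intersections of subsets of the first k coordinate hyperplanes of ℂ^ℓ) is a modular element of the intersection lattice of the intermediate arrangement A^k_ℓ(r). -/
open Submodule

/-!
Let `X` be cut out by `x_δ = 0` for `δ ∈ D`, so that `v ∈ X + Y` iff `v|_D` extends to an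
element of `Y`. Every relation `Y` imposes on the coordinates in `D` (`x_δ = 0`, or
`x_δ = c x_δ'` with `c` an `r`-th root of unity) is a hyperplane of `A^k_ℓ(r)` containing
`X + Y`, so any `v` in all such hyperplanes satisfies it. Such a `v` then extends: give the
coordinate `m` the value `c v_δ` whenever `Y` forces `x_m = c x_δ` with `δ ∈ D`, and `0`
otherwise. Since links by roots of unity compose and invert, this is well defined and
satisfies every defining hyperplane of `Y`. Hence `X + Y` is the intersection of the
hyperplanes containing it.
-/

lemma mem_arrLatIn_top_of_forall_mem {V : Type*} [AddCommGroup V] [Module ℂ V]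
    {A : Set (Submodule ℂ V)} {W : Submodule ℂ V}
    (h : ∀ v, (∀ H ∈ A, W ≤ H → v ∈ H) → v ∈ W) : W ∈ ArrLatIn ⊤ A := by
  refine ⟨{H | H ∈ A ∧ W ≤ H}, fun H hH => hH.1,
    le_antisymm (le_inf le_top (le_sInf fun H hH => hH.2)) fun v hv => h v fun H hA hW => ?_⟩
  exact mem_sInf.mp (mem_inf.mp hv).2 H ⟨hA, hW⟩

section

variable {ℓ : ℕ}

@[simp]
lemma mem_coordH (i : Fin ℓ) (x : Fin ℓ → ℂ) : x ∈ coordH ℓ i ↔ x i = 0 := by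
  simp [coordH]

@[simp]
lemma mem_diffH (i j : Fin ℓ) (c : ℂ) (x : Fin ℓ → ℂ) : x ∈ diffH ℓ i j c ↔ x i = c * x j := by
  simp [diffH, sub_eq_zero]

lemma coordH_inf_coordH_le_diffH (i j : Fin ℓ) (c : ℂ) :
    coordH ℓ i ⊓ coordH ℓ j ≤ diffH ℓ i j c := fun x hx => by
  simp_all

lemma diffH_self_of_ne_one (i : Fin ℓ) {c : ℂ} (hc : c ≠ 1) : diffH ℓ i i c = coordH ℓ i := by
  ext x
  have : x i = c * x i ↔ x i = 0 := by
    rw [← sub_eq_zero, ← one_sub_mul, mul_eq_zero, sub_eq_zero, eq_comm]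
    simp [hc]
  simpa using this

def RootLinked (r : ℕ) (Y : Submodule ℂ (Fin ℓ → ℂ)) (i j : Fin ℓ) (c : ℂ) : Prop :=
  c ^ r = 1 ∧ Y ≤ diffH ℓ i j c

namespace RootLinked

variable {r : ℕ} {Y : Submodule ℂ (Fin ℓ → ℂ)} {i j m : Fin ℓ} {a b c : ℂ}

lemma refl (r : ℕ) (Y : Submodule ℂ (Fin ℓ → ℂ)) (i : Fin ℓ) : RootLinked r Y i i 1 :=
  ⟨one_pow r, fun x _ => by simp⟩

lemma trans (h₁ : RootLinked r Y i j a) (h₂ : RootLinked r Y j m b) :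
    RootLinked r Y i m (a * b) :=
  ⟨by rw [mul_pow, h₁.1, h₂.1, one_mul], fun x hx => by
    rw [mem_diffH, (mem_diffH ..).mp (h₁.2 hx), (mem_diffH ..).mp (h₂.2 hx), mul_assoc]⟩

lemma ne_zero (hr : r ≠ 0) (h : RootLinked r Y i j c) : c ≠ 0 :=
  (IsUnit.of_pow_eq_one h.1 hr).ne_zero

lemma symm (hr : r ≠ 0) (h : RootLinked r Y i j c) : RootLinked r Y j i c⁻¹ :=
  ⟨by rw [inv_pow, h.1, inv_one], fun x hx => by
    rw [mem_diffH, (mem_diffH ..).mp (h.2 hx), inv_mul_cancel_left₀ (h.ne_zero hr)]⟩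

lemma le_coordH (hr : r ≠ 0) (h : RootLinked r Y i j c) (hi : Y ≤ coordH ℓ i) :
    Y ≤ coordH ℓ j := fun x hx => by
  have := (mem_diffH ..).mp ((h.symm hr).2 hx)
  rw [mem_coordH, this, (mem_coordH ..).mp (hi hx), mul_zero]

end RootLinked

structure RespectsLinks (r : ℕ) (Y : Submodule ℂ (Fin ℓ → ℂ)) (D : Set (Fin ℓ))
    (v : Fin ℓ → ℂ) : Prop where
  eq_zero : ∀ δ ∈ D, Y ≤ coordH ℓ δ → v δ = 0
  eq_mul : ∀ δ ∈ D, ∀ δ' ∈ D, ∀ c, RootLinked r Y δ δ' c → v δ = c * v δ'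

open Classical in
/-- Extends `v|_D` to all coordinates by following the links of `Y` into `D`. -/
noncomputable def linkedLift (r : ℕ) (Y : Submodule ℂ (Fin ℓ → ℂ)) (D : Set (Fin ℓ))
    (v : Fin ℓ → ℂ) : Fin ℓ → ℂ := fun m =>
  if h : ∃ p : Fin ℓ × ℂ, p.1 ∈ D ∧ RootLinked r Y m p.1 p.2 then h.choose.2 * v h.choose.1
  else 0

namespace RespectsLinks

variable {r : ℕ} {Y : Submodule ℂ (Fin ℓ → ℂ)} {D : Set (Fin ℓ)} {v : Fin ℓ → ℂ}

lemma linkedLift_eq (hr : r ≠ 0) (hv : RespectsLinks r Y D v) {m δ : Fin ℓ} {c : ℂ}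
    (hδ : δ ∈ D) (h : RootLinked r Y m δ c) : linkedLift r Y D v m = c * v δ := by
  have hP : ∃ p : Fin ℓ × ℂ, p.1 ∈ D ∧ RootLinked r Y m p.1 p.2 := ⟨(δ, c), hδ, h⟩
  obtain ⟨hδ₀, h₀⟩ := hP.choose_spec
  rw [linkedLift, dif_pos hP, hv.eq_mul _ hδ₀ _ hδ _ ((h₀.symm hr).trans h), mul_assoc,
    mul_inv_cancel_left₀ (h₀.ne_zero hr)]

lemma linkedLift_of_mem (hr : r ≠ 0) (hv : RespectsLinks r Y D v) {δ : Fin ℓ} (hδ : δ ∈ D) :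
    linkedLift r Y D v δ = v δ := by
  rw [hv.linkedLift_eq hr hδ (RootLinked.refl r Y δ), one_mul]

lemma linkedLift_of_le_coordH (hr : r ≠ 0) (hv : RespectsLinks r Y D v) {i : Fin ℓ}
    (hi : Y ≤ coordH ℓ i) : linkedLift r Y D v i = 0 := by
  by_cases hP : ∃ p : Fin ℓ × ℂ, p.1 ∈ D ∧ RootLinked r Y i p.1 p.2
  · obtain ⟨⟨δ, c⟩, hδ, h⟩ := hP
    rw [hv.linkedLift_eq hr hδ h, hv.eq_zero δ hδ (h.le_coordH hr hi), mul_zero]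
  · rw [linkedLift, dif_neg hP]

lemma linkedLift_of_le_diffH (hr : r ≠ 0) (hv : RespectsLinks r Y D v) {i j : Fin ℓ} {ζ : ℂ}
    (hζ : ζ ^ r = 1) (hij : Y ≤ diffH ℓ i j ζ) :
    linkedLift r Y D v i = ζ * linkedLift r Y D v j := by
  have hlink : RootLinked r Y i j ζ := ⟨hζ, hij⟩
  by_cases hP : ∃ p : Fin ℓ × ℂ, p.1 ∈ D ∧ RootLinked r Y j p.1 p.2
  · obtain ⟨⟨δ, c⟩, hδ, h⟩ := hP
    rw [hv.linkedLift_eq hr hδ (hlink.trans h), hv.linkedLift_eq hr hδ h, mul_assoc]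
  · have hPi : ¬ ∃ p : Fin ℓ × ℂ, p.1 ∈ D ∧ RootLinked r Y i p.1 p.2 := by
      rintro ⟨⟨δ, c⟩, hδ, h⟩
      exact hP ⟨⟨δ, ζ⁻¹ * c⟩, hδ, (hlink.symm hr).trans h⟩
    rw [linkedLift, linkedLift, dif_neg hP, dif_neg hPi, mul_zero]

lemma linkedLift_mem (hr : r ≠ 0) {k : ℕ} (hY : Y ∈ ArrLatIn ⊤ (interArr r ℓ k))
    (hv : RespectsLinks r Y D v) : linkedLift r Y D v ∈ Y := by
  obtain ⟨T, hT, rfl⟩ := hY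
  refine mem_inf.mpr ⟨mem_top, mem_sInf.mpr fun H hH => ?_⟩
  have hYH : ⊤ ⊓ sInf T ≤ H := inf_le_right.trans (sInf_le hH)
  rcases hT hH with ⟨i, -, rfl⟩ | ⟨i, j, -, ζ, hζ, rfl⟩
  · exact (mem_coordH ..).mpr (hv.linkedLift_of_le_coordH hr hYH)
  · exact (mem_diffH ..).mpr (hv.linkedLift_of_le_diffH hr hζ hYH)

end RespectsLinks

lemma respectsLinks_of_forall_mem {r k : ℕ} (hr : r ≠ 0) {X Y : Submodule ℂ (Fin ℓ → ℂ)}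
    {D : Set (Fin ℓ)} (hD : ∀ δ ∈ D, (δ : ℕ) < k ∧ X ≤ coordH ℓ δ) {v : Fin ℓ → ℂ}
    (hv : ∀ H ∈ interArr r ℓ k, X ⊔ Y ≤ H → v ∈ H) : RespectsLinks r Y D v := by
  have eq_zero : ∀ δ ∈ D, Y ≤ coordH ℓ δ → v δ = 0 := fun δ hδ hY =>
    (mem_coordH ..).mp (hv _ (Or.inl ⟨δ, (hD δ hδ).1, rfl⟩) (sup_le (hD δ hδ).2 hY))
  have eq_mul_of_lt : ∀ δ ∈ D, ∀ δ' ∈ D, δ < δ' → ∀ c, RootLinked r Y δ δ' c →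
      v δ = c * v δ' := fun δ hδ δ' hδ' hlt c h =>
    (mem_diffH ..).mp (hv _ (Or.inr ⟨δ, δ', hlt, c, h.1, rfl⟩)
      (sup_le ((le_inf (hD δ hδ).2 (hD δ' hδ').2).trans (coordH_inf_coordH_le_diffH ..)) h.2))
  refine ⟨eq_zero, fun δ hδ δ' hδ' c h => ?_⟩
  rcases lt_trichotomy δ δ' with hlt | rfl | hgt
  · exact eq_mul_of_lt δ hδ δ' hδ' hlt c h
  · by_cases hc : c = 1
    · rw [hc, one_mul]
    · rw [eq_zero δ hδ (diffH_self_of_ne_one δ hc ▸ h.2), mul_zero]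
  · rw [eq_mul_of_lt δ' hδ' δ hδ hgt _ (h.symm hr), mul_inv_cancel_left₀ (h.ne_zero hr)]

end

theorem stmt_7_general (r ℓ k : ℕ) (hr : 2 ≤ r) :
    ∀ X ∈ ArrLatIn ⊤ (boolArr ℓ k), ModularIn (ArrLatIn ⊤ (interArr r ℓ k)) X := by
  have hr0 : r ≠ 0 := by omega
  rintro X ⟨S, hS, rfl⟩
  refine ⟨⟨S, hS.trans Set.subset_union_left, rfl⟩, fun Y hY => ?_⟩
  set D : Set (Fin ℓ) := {δ | (δ : ℕ) < k ∧ coordH ℓ δ ∈ S}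
  have hD : ∀ δ ∈ D, (δ : ℕ) < k ∧ ⊤ ⊓ sInf S ≤ coordH ℓ δ := fun δ hδ =>
    ⟨hδ.1, inf_le_right.trans (sInf_le hδ.2)⟩
  refine mem_arrLatIn_top_of_forall_mem fun v hv => ?_
  have hlinks := respectsLinks_of_forall_mem hr0 hD hv
  have hvw : v - linkedLift r Y D v ∈ ⊤ ⊓ sInf S := by
    refine mem_inf.mpr ⟨mem_top, mem_sInf.mpr fun H hH => ?_⟩
    obtain ⟨i, hik, rfl⟩ := hS hH
    simp [hlinks.linkedLift_of_mem hr0 (show i ∈ D from ⟨hik, hH⟩)]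
  simpa using add_mem_sup hvw (hlinks.linkedLift_mem hr0 hY)

/-- For `r ≥ 2`, `ℓ ≥ 3`, `0 ≤ k ≤ ℓ`, every element of the lattice of the Boolean
subarrangement `B^k_ℓ` is modular in the lattice of `A^k_ℓ(r)`. -/
theorem stmt_7 (r ℓ k : ℕ) (hr : 2 ≤ r) (hℓ : 3 ≤ ℓ) (hk : k ≤ ℓ) :
    ∀ X ∈ ArrLatIn ⊤ (boolArr ℓ k), ModularIn (ArrLatIn ⊤ (interArr r ℓ k)) X :=
  stmt_7_general r ℓ k hr
end

section
/- Let W = G(r,r,ℓ) with r ≥ 2, ℓ = 2p−1 for p ≥ 2, A = A(W), and ζ an r-th root of unity. Set X = ∩_{i=1}^{p−1} H_{2i−1,2i}(ζ), where H_{i,j}(ζ) = ker(x_i − ζ x_j). Then X ∈ L(A), dim X = p, and the restriction A^X is linearly isomorphic to the intermediate arrangement A^{p−1}_p(r). -/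
open Submodule

/-
The subspace `X` is the image of the injective map `(y₀, …, y_{p-1}) ↦ (y₀, ζ⁻¹y₀, y₁, ζ⁻¹y₁, …, y_{p-1})`,
so it lies in `L(A)` and has dimension `p`. Restricting to `X` means pulling linear forms back along
this map. A hyperplane `ker (x_a - ξ x_b)` whose indices lie in different pairs pulls back to
`ker (y_i - ξ' y_j)` with `ξ'` again an `r`-th root of unity, while one whose indices form a pair
`{2i, 2i+1}` pulls back to the coordinate hyperplane `ker y_i` (or to everything when `ξ = ζ`); since
`r ≥ 2` there is an `r`-th root of unity `ξ ≠ ζ`, so every `ker y_i` with `i < p - 1` occurs.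
-/

theorem restrict_range_eq_image_map_comap {V W : Type*} [AddCommGroup V] [Module ℂ V]
    [AddCommGroup W] [Module ℂ W] (A : Set (Submodule ℂ V)) (φ : W →ₗ[ℂ] V) :
    Restrict A (LinearMap.range φ) =
      map φ '' (comap φ '' {H | H ∈ A ∧ comap φ H ≠ ⊤}) := by
  ext K
  simp only [Restrict, Set.image_image, Set.mem_ofPred_eq, Set.mem_image, map_comap_eq,
    LinearMap.range_le_iff_comap, and_assoc, eq_comm (a := K)]

theorem coordH_ne_top {n : ℕ} (i : Fin n) : coordH n i ≠ ⊤ := by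
  intro h
  have : Pi.single i (1 : ℂ) ∈ coordH n i := h ▸ mem_top
  simp [coordH] at this

theorem diffH_ne_top {n : ℕ} {i j : Fin n} (hij : i ≠ j) (ξ : ℂ) : diffH n i j ξ ≠ ⊤ := by
  intro h
  have : Pi.single i (1 : ℂ) ∈ diffH n i j ξ := h ▸ mem_top
  simp [diffH, Pi.single_eq_of_ne' hij] at this

theorem ker_smul_proj {n : ℕ} {c : ℂ} (hc : c ≠ 0) (i : Fin n) :
    LinearMap.ker (c • LinearMap.proj i : (Fin n → ℂ) →ₗ[ℂ] ℂ) = coordH n i := by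
  ext y
  simp [coordH, hc]

theorem ker_smul_proj_sub_smul_proj {n : ℕ} {c : ℂ} (hc : c ≠ 0) (d : ℂ) (i j : Fin n) :
    LinearMap.ker (c • LinearMap.proj i - d • LinearMap.proj j : (Fin n → ℂ) →ₗ[ℂ] ℂ) =
      diffH n i j (d / c) := by
  ext y
  simp only [diffH, LinearMap.mem_ker, LinearMap.sub_apply, LinearMap.smul_apply,
    LinearMap.proj_apply, smul_eq_mul, sub_eq_zero]
  rw [div_mul_eq_mul_div, eq_div_iff hc, mul_comm]

theorem ne_top_of_mem_interArr {r n k : ℕ} {K : Submodule ℂ (Fin n → ℂ)}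
    (hK : K ∈ interArr r n k) : K ≠ ⊤ := by
  obtain ⟨i, -, rfl⟩ | ⟨i, j, hij, ξ, -, rfl⟩ := hK
  · exact coordH_ne_top i
  · exact diffH_ne_top hij.ne ξ

section PairParam

variable {p : ℕ} {ζ : ℂ}

def half (m : Fin (2 * p - 1)) : Fin p := ⟨m / 2, by omega⟩

noncomputable def pairScale (ζ : ℂ) (m : ℕ) : ℂ := ζ⁻¹ ^ (m % 2)

variable (p ζ) in
noncomputable def pairParam : (Fin p → ℂ) →ₗ[ℂ] (Fin (2 * p - 1) → ℂ) :=
  LinearMap.pi fun m => pairScale ζ m • LinearMap.proj (half m)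

theorem pairParam_apply (y : Fin p → ℂ) (m : Fin (2 * p - 1)) :
    pairParam p ζ y m = pairScale ζ m * y (half m) := rfl

theorem pairScale_two_mul (i : ℕ) : pairScale ζ (2 * i) = 1 := by
  simp [pairScale]

theorem pairScale_two_mul_add_one (i : ℕ) : pairScale ζ (2 * i + 1) = ζ⁻¹ := by
  simp [pairScale, Nat.add_mod]

theorem pairScale_ne_zero (hζ : ζ ≠ 0) (m : ℕ) : pairScale ζ m ≠ 0 :=
  pow_ne_zero _ (inv_ne_zero hζ)

theorem pairScale_pow {r : ℕ} (hζ : ζ ^ r = 1) (m : ℕ) : pairScale ζ m ^ r = 1 := by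
  rw [pairScale, ← pow_mul, mul_comm, pow_mul, inv_pow, hζ, inv_one, one_pow]

theorem half_two_mul (i : Fin p) (h : 2 * (i : ℕ) < 2 * p - 1) : half ⟨2 * i, h⟩ = i := by
  ext; simp [half]

theorem half_two_mul_add_one (i : Fin p) (h : 2 * (i : ℕ) + 1 < 2 * p - 1) :
    half ⟨2 * i + 1, h⟩ = i := by
  ext; simp [half]; omega

theorem pairParam_apply_two_mul (y : Fin p → ℂ) (i : Fin p) (h : 2 * (i : ℕ) < 2 * p - 1) :
    pairParam p ζ y ⟨2 * i, h⟩ = y i := by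
  rw [pairParam_apply, pairScale_two_mul, one_mul, half_two_mul]

theorem pairParam_injective : Function.Injective (pairParam p ζ) := by
  intro y z h
  funext i
  have := congrFun h ⟨2 * i, by omega⟩
  rwa [pairParam_apply_two_mul, pairParam_apply_two_mul] at this

variable (p ζ) in
/-- The paper's `X`, with coordinates indexed from `0`. -/
noncomputable def pairedSubspace : Submodule ℂ (Fin (2 * p - 1) → ℂ) :=
  ⨅ i : Fin (p - 1), diffH (2 * p - 1) ⟨2 * i, by omega⟩ ⟨2 * i + 1, by omega⟩ ζ

theorem range_pairParam (hζ : ζ ≠ 0) : LinearMap.range (pairParam p ζ) = pairedSubspace p ζ := by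
  apply le_antisymm
  · rintro _ ⟨y, rfl⟩
    simp only [pairedSubspace, mem_iInf, diffH, LinearMap.mem_ker, LinearMap.sub_apply,
      LinearMap.smul_apply, LinearMap.proj_apply, smul_eq_mul, pairParam_apply,
      pairScale_two_mul, pairScale_two_mul_add_one]
    intro i
    rw [half_two_mul (i := ⟨i, by omega⟩), half_two_mul_add_one (i := ⟨i, by omega⟩),
      mul_inv_cancel_left₀ hζ, one_mul, sub_self]
  · intro x hx
    simp only [pairedSubspace, mem_iInf, diffH, LinearMap.mem_ker, LinearMap.sub_apply,
      LinearMap.smul_apply, LinearMap.proj_apply, smul_eq_mul, sub_eq_zero] at hx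
    refine ⟨fun i => x ⟨2 * i, by omega⟩, funext fun ⟨m, hm⟩ => ?_⟩
    rw [pairParam_apply]
    obtain ⟨k, rfl | rfl⟩ := Nat.even_or_odd' m
    · rw [pairScale_two_mul, one_mul]
      congr 1; ext; simp [half]
    · have hhalf : (⟨2 * (half (p := p) ⟨2 * k + 1, hm⟩ : ℕ), by omega⟩ : Fin (2 * p - 1)) =
          ⟨2 * k, by omega⟩ := by
        ext; simp [half]; omega
      rw [pairScale_two_mul_add_one, hhalf, hx ⟨k, by omega⟩, inv_mul_cancel_left₀ hζ]

theorem pairedSubspace_mem_arrLatIn {r : ℕ} (hζ : ζ ^ r = 1) :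
    pairedSubspace p ζ ∈ ArrLatIn ⊤ (interArr r (2 * p - 1) 0) := by
  refine ⟨Set.range fun i : Fin (p - 1) =>
    diffH (2 * p - 1) ⟨2 * i, by omega⟩ ⟨2 * i + 1, by omega⟩ ζ, ?_, ?_⟩
  · rintro _ ⟨i, rfl⟩
    exact Or.inr ⟨_, _, Fin.lt_def.mpr (Nat.lt_succ_self _), ζ, hζ, rfl⟩
  · rw [sInf_range, top_inf_eq, pairedSubspace]

theorem comap_pairParam_diffH (a b : Fin (2 * p - 1)) (ξ : ℂ) :
    comap (pairParam p ζ) (diffH (2 * p - 1) a b ξ) =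
      LinearMap.ker (pairScale ζ a • LinearMap.proj (half a) -
        (ξ * pairScale ζ b) • LinearMap.proj (half b) : (Fin p → ℂ) →ₗ[ℂ] ℂ) := by
  ext y
  simp only [mem_comap, diffH, LinearMap.mem_ker, LinearMap.sub_apply, LinearMap.smul_apply,
    LinearMap.proj_apply, smul_eq_mul, pairParam_apply]
  ring_nf

theorem comap_pairParam_mem_interArr {r : ℕ} (hζ : ζ ^ r = 1) (hζ0 : ζ ≠ 0)
    {H : Submodule ℂ (Fin (2 * p - 1) → ℂ)} (hH : H ∈ interArr r (2 * p - 1) 0)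
    (htop : comap (pairParam p ζ) H ≠ ⊤) : comap (pairParam p ζ) H ∈ interArr r p (p - 1) := by
  obtain ⟨i, hi, -⟩ | ⟨a, b, hab, ξ, hξ, rfl⟩ := hH
  · exact absurd hi (Nat.not_lt_zero _)
  rw [comap_pairParam_diffH] at htop ⊢
  rw [Fin.lt_def] at hab
  by_cases hpair : half a = half b
  · rw [hpair, ← sub_smul] at htop ⊢
    have hne : pairScale ζ a - ξ * pairScale ζ b ≠ 0 := by
      intro h
      rw [h, zero_smul, LinearMap.ker_zero] at htop
      exact htop rfl
    rw [ker_smul_proj hne]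
    refine Or.inl ⟨half b, ?_, rfl⟩
    simp only [half, Fin.ext_iff] at hpair ⊢
    omega
  · rw [ker_smul_proj_sub_smul_proj (pairScale_ne_zero hζ0 _)]
    refine Or.inr ⟨half a, half b, ?_, _, ?_, rfl⟩
    · simp only [half, Fin.ext_iff, Fin.lt_def] at hpair ⊢
      omega
    · rw [div_pow, mul_pow, hξ, pairScale_pow hζ, pairScale_pow hζ, one_mul, div_one]

theorem exists_comap_pairParam_eq {r : ℕ} (hr : 2 ≤ r) (hζ : ζ ^ r = 1) (hζ0 : ζ ≠ 0)
    {K : Submodule ℂ (Fin p → ℂ)} (hK : K ∈ interArr r p (p - 1)) :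
    ∃ H ∈ interArr r (2 * p - 1) 0, comap (pairParam p ζ) H = K := by
  obtain ⟨i, hi, rfl⟩ | ⟨i, j, hij, ξ, hξ, rfl⟩ := hK
  · obtain ⟨ω, hωr, hω1⟩ : ∃ ω : ℂ, ω ^ r = 1 ∧ ω ≠ 1 :=
      have h := Complex.isPrimitiveRoot_exp r (by omega)
      ⟨_, h.pow_eq_one, h.ne_one (by omega)⟩
    refine ⟨diffH (2 * p - 1) ⟨2 * i, by omega⟩ ⟨2 * i + 1, by omega⟩ (ζ * ω),
      Or.inr ⟨_, _, Fin.lt_def.mpr (by simp), _, by rw [mul_pow, hζ, hωr, one_mul], rfl⟩,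
      ?_⟩
    rw [comap_pairParam_diffH, half_two_mul, half_two_mul_add_one, pairScale_two_mul,
      pairScale_two_mul_add_one, ← sub_smul, mul_right_comm, mul_inv_cancel₀ hζ0, one_mul]
    exact ker_smul_proj (sub_ne_zero.mpr hω1.symm) i
  · rw [Fin.lt_def] at hij
    refine ⟨diffH (2 * p - 1) ⟨2 * i, by omega⟩ ⟨2 * j, by omega⟩ ξ,
      Or.inr ⟨_, _, Fin.lt_def.mpr (by simp; omega), _, hξ, rfl⟩, ?_⟩
    rw [comap_pairParam_diffH, half_two_mul, half_two_mul, pairScale_two_mul, pairScale_two_mul,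
      mul_one, ker_smul_proj_sub_smul_proj one_ne_zero, div_one]

theorem image_comap_pairParam {r : ℕ} (hr : 2 ≤ r) (hζ : ζ ^ r = 1) (hζ0 : ζ ≠ 0) :
    comap (pairParam p ζ) '' {H | H ∈ interArr r (2 * p - 1) 0 ∧ comap (pairParam p ζ) H ≠ ⊤} =
      interArr r p (p - 1) := by
  apply subset_antisymm
  · rintro _ ⟨H, ⟨hH, htop⟩, rfl⟩
    exact comap_pairParam_mem_interArr hζ hζ0 hH htop
  · intro K hK
    obtain ⟨H, hH, rfl⟩ := exists_comap_pairParam_eq hr hζ hζ0 hK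
    exact ⟨H, ⟨hH, ne_top_of_mem_interArr hK⟩, rfl⟩

end PairParam

/-- For `W = G(r,r,ℓ)` with `ℓ = 2p−1`, `p ≥ 2`, `r ≥ 2`, and
`X = ∩_{i=1}^{p−1} H_{2i−1,2i}(ζ)`, we have `X ∈ L(A)`, `dim X = p`, and the restriction
`A^X` is linearly isomorphic to the intermediate arrangement `A^{p−1}_p(r)`. -/
theorem stmt_18 (r p ℓ : ℕ) (hr : 2 ≤ r) (hℓ : ℓ = 2 * p - 1)
    (ζ : ℂ) (hζ : ζ ^ r = 1) :
    (⨅ i : Fin (p - 1), diffH ℓ ⟨2 * i.val, by have := i.isLt; omega⟩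
        ⟨2 * i.val + 1, by have := i.isLt; omega⟩ ζ) ∈ ArrLatIn ⊤ (interArr r ℓ 0) ∧
    Module.finrank ℂ ↥(⨅ i : Fin (p - 1), diffH ℓ ⟨2 * i.val, by have := i.isLt; omega⟩
        ⟨2 * i.val + 1, by have := i.isLt; omega⟩ ζ) = p ∧
    ∃ φ : (Fin p → ℂ) →ₗ[ℂ] (Fin ℓ → ℂ), Function.Injective φ ∧
      LinearMap.range φ = (⨅ i : Fin (p - 1), diffH ℓ ⟨2 * i.val, by have := i.isLt; omega⟩
        ⟨2 * i.val + 1, by have := i.isLt; omega⟩ ζ) ∧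
      Restrict (interArr r ℓ 0)
          (⨅ i : Fin (p - 1), diffH ℓ ⟨2 * i.val, by have := i.isLt; omega⟩
            ⟨2 * i.val + 1, by have := i.isLt; omega⟩ ζ) =
        (fun K => Submodule.map φ K) '' interArr r p (p - 1) := by
  subst hℓ
  have hζ0 : ζ ≠ 0 := by
    rintro rfl
    exact zero_ne_one ((zero_pow (M₀ := ℂ) (by omega : r ≠ 0)).symm.trans hζ)
  have hrange := range_pairParam (p := p) hζ0
  have hdim : Module.finrank ℂ (pairedSubspace p ζ) = p := by
    rw [← hrange, LinearMap.finrank_range_of_inj pairParam_injective, Module.finrank_fin_fun]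
  have hrestrict : Restrict (interArr r (2 * p - 1) 0) (pairedSubspace p ζ) =
      map (pairParam p ζ) '' interArr r p (p - 1) := by
    rw [← hrange, restrict_range_eq_image_map_comap, image_comap_pairParam hr hζ hζ0]
  exact ⟨pairedSubspace_mem_arrLatIn hζ, hdim, pairParam p ζ, pairParam_injective, hrange,
    hrestrict⟩
end
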